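/- Let g, h be bounded nonnegative measurable functions (h on [0,w*], g on [0,w*]²), let W₁, W₂, ... be i.i.d. random variables with distribution μ on [0,w*], and define S₀(w) = h(w), S_{i+1}(w) = S_i(w) + g(w, W_{i+1}). Let g̃(x) = E[g(x,W)] and g̃₊ = sup_{x} g̃(x). Then for any w ∈ [0,w*] and λ ≥ g̃₊, one has ∑_{k=1}^∞ E[∏_{i=0}^{k-1} S_i(w)/(S_i(w)+λ)] = h(w)/(λ - g̃(w)), where the right-hand side is interpreted as +∞ when λ = g̃₊ = g̃(w). -/

import Mathlib

/-!
Fix `w`, write `S_i` for the companion process, `T_k = ∏_{i<k} S_i / (S_i + λ)`,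
`t_k = E[T_{k+1}]` and `u_k = E[T_k S_k]`. Since `T_{k+1} (S_k + λ) = T_k S_k`, while
`S_{k+1} = S_k + g(w, W_{k+1})` with `W_{k+1}` independent of `T_{k+1}`, one gets
`u_{k+1} = u_k - (λ - g̃(w)) t_k`, hence `(λ - g̃(w)) ∑_{k<N} t_k = h(w) - u_N`.
As `u_k ≤ (h(w) + λ + kJ) t_k`, a positive limit of the decreasing sequence `u` makes
`∑ t_k` diverge like the harmonic series. This gives divergence when `λ = g̃(w)`, and forces
`u_N → 0`, i.e. `∑ t_k = h(w) / (λ - g̃(w))`, when `λ > g̃(w)`.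
-/

open MeasureTheory ProbabilityTheory Filter Finset

theorem not_summable_div_add_mul_natCast {L a J : ℝ} (hL : 0 < L) (ha : 0 < a) (hJ : 0 ≤ J) :
    ¬ Summable (fun k : ℕ => L / (a + k * J)) := by
  intro hs
  refine Real.not_summable_one_div_natCast ((summable_nat_add_iff 1).mp ?_)
  refine (hs.mul_left ((a + J) / L)).of_nonneg_of_le (fun k => by positivity) fun k => ?_
  have hk : (0 : ℝ) ≤ k := k.cast_nonneg
  have hcancel : (a + J) / L * (L / (a + k * J)) = (a + J) / (a + k * J) := by
    field_simp
  rw [hcancel, div_le_div_iff₀ (by positivity) (by positivity)]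
  push_cast
  nlinarith

theorem tsum_ofReal_eq_top_of_le_mul {t : ℕ → ℝ} {L a J : ℝ} (hL : 0 < L) (ha : 0 < a)
    (hJ : 0 ≤ J) (ht : ∀ k, 0 ≤ t k) (hLt : ∀ k, L ≤ (a + k * J) * t k) :
    ∑' k, ENNReal.ofReal (t k) = ⊤ := by
  by_contra hfin
  have hsum : Summable t := by
    simpa [ENNReal.toReal_ofReal (ht _)] using ENNReal.summable_toReal hfin
  refine not_summable_div_add_mul_natCast hL ha hJ
    (hsum.of_nonneg_of_le (fun k => by positivity) fun k => ?_)
  rw [div_le_iff₀' (by positivity)]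
  exact hLt k

theorem tsum_ofReal_eq_div_of_recurrence {t u : ℕ → ℝ} {c a J : ℝ}
    (ht : ∀ k, 0 ≤ t k) (hu : ∀ k, 0 ≤ u k) (hu0 : 0 < u 0) (hc : 0 ≤ c) (ha : 0 < a)
    (hJ : 0 ≤ J) (hrec : ∀ k, u (k + 1) = u k - c * t k)
    (hgrowth : ∀ k, u k ≤ (a + k * J) * t k) :
    ∑' k, ENNReal.ofReal (t k) = ENNReal.ofReal (u 0) / ENNReal.ofReal c := by
  have hpartial : ∀ N, c * ∑ k ∈ range N, t k = u 0 - u N := by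
    intro N
    induction N with
    | zero => simp
    | succ N ih => rw [sum_range_succ, mul_add, ih, hrec]; ring
  rcases hc.eq_or_lt with rfl | hc
  · have hconst : ∀ k, u k = u 0 := fun k => by linarith [hpartial k]
    rw [ENNReal.ofReal_zero, ENNReal.div_zero (by positivity)]
    exact tsum_ofReal_eq_top_of_le_mul hu0 ha hJ ht fun k => hconst k ▸ hgrowth k
  have hsum : Summable t := summable_of_sum_range_le (c := u 0 / c) ht fun N =>
    (le_div_iff₀' hc).2 (by linarith [hpartial N, hu N])
  have hanti : Antitone u := antitone_nat_of_succ_le fun k => by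
    rw [hrec]; nlinarith [ht k]
  have hbdd : BddBelow (Set.range u) := ⟨0, by rintro _ ⟨k, rfl⟩; exact hu k⟩
  have hinf : ⨅ k, u k = 0 := by
    refine (le_ciInf hu).antisymm' (not_lt.1 fun hpos => ?_)
    have htop := tsum_ofReal_eq_top_of_le_mul hpos ha hJ ht fun k =>
      (ciInf_le hbdd k).trans (hgrowth k)
    rw [← ENNReal.ofReal_tsum_of_nonneg ht hsum] at htop
    exact ENNReal.ofReal_ne_top htop
  have hlim : Tendsto u atTop (nhds 0) := hinf ▸ tendsto_atTop_ciInf hanti hbdd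
  have hsum_eq : HasSum t (u 0 / c) := by
    refine (hasSum_iff_tendsto_nat_of_nonneg ht _).2 ?_
    have hdiv := (tendsto_const_nhds (x := u 0) |>.sub hlim).div_const c
    rw [sub_zero] at hdiv
    exact hdiv.congr fun N => by rw [← hpartial N, mul_div_cancel_left₀ _ hc.ne']
  rw [← ENNReal.ofReal_tsum_of_nonneg ht hsum, hsum_eq.tsum_eq, ENNReal.ofReal_div_of_pos hc]

theorem iIndepFun.integral_mul_comp_eq_of_measurable_natural {Ω ι β : Type*}
    [MeasurableSpace Ω] {μ : Measure Ω} [LinearOrder ι] [MeasurableSpace β]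
    [NormedAddCommGroup β] [BorelSpace β] {W : ι → Ω → β} (hW : ∀ i, StronglyMeasurable (W i))
    (hind : iIndepFun W μ) {i j : ι} (hij : i < j) {X : Ω → ℝ}
    (hX : Measurable[Filtration.natural W hW i] X) {φ : β → ℝ} (hφ : Measurable φ) :
    ∫ ω, X ω * φ (W j ω) ∂μ = (∫ ω, X ω ∂μ) * ∫ ω, φ (W j ω) ∂μ := by
  have hindep : IndepFun X (W j) μ := (IndepFun_iff_Indep _ _ _).2
    (indep_of_indep_of_le_left (hind.indep_comap_natural_of_lt hW hij).symm hX.comap_le)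
  exact (hindep.comp measurable_id hφ).integral_mul_eq_mul_integral
    (hX.mono (Filtration.le _ i) le_rfl).aestronglyMeasurable
    (hφ.comp (hW j).measurable).aestronglyMeasurable

section RatioProd

variable {Ω : Type*} {S : ℕ → Ω → ℝ} {lam : ℝ}

noncomputable def ratioProd (S : ℕ → Ω → ℝ) (lam : ℝ) (k : ℕ) (ω : Ω) : ℝ :=
  ∏ i ∈ range k, S i ω / (S i ω + lam)

theorem ratioProd_zero (ω : Ω) : ratioProd S lam 0 ω = 1 := prod_range_zero _

theorem ratioProd_succ (k : ℕ) (ω : Ω) :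
    ratioProd S lam (k + 1) ω = ratioProd S lam k ω * (S k ω / (S k ω + lam)) :=
  prod_range_succ _ _

theorem ratioProd_succ_eq_zero {ω : Ω} (h0 : S 0 ω = 0) (k : ℕ) : ratioProd S lam (k + 1) ω = 0 :=
  prod_eq_zero (mem_range.2 k.succ_pos) (by rw [h0, zero_div])

theorem ratioProd_nonneg (hS : ∀ i ω, 0 ≤ S i ω) (hlam : 0 ≤ lam) (k : ℕ) (ω : Ω) :
    0 ≤ ratioProd S lam k ω :=
  prod_nonneg fun i _ => div_nonneg (hS i ω) (add_nonneg (hS i ω) hlam)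

theorem ratioProd_le_one (hS : ∀ i ω, 0 ≤ S i ω) (hlam : 0 ≤ lam) (k : ℕ) (ω : Ω) :
    ratioProd S lam k ω ≤ 1 :=
  prod_le_one (fun i _ => div_nonneg (hS i ω) (add_nonneg (hS i ω) hlam)) fun i _ =>
    div_le_one_of_le₀ (le_add_of_nonneg_right hlam) (add_nonneg (hS i ω) hlam)

theorem ratioProd_succ_mul_add (hS : ∀ i ω, 0 ≤ S i ω) (hlam : 0 ≤ lam) (k : ℕ) (ω : Ω) :
    ratioProd S lam (k + 1) ω * (S k ω + lam) = ratioProd S lam k ω * S k ω := by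
  rw [ratioProd_succ, mul_assoc, div_mul_cancel_of_imp]
  exact fun h0 => ((add_eq_zero_iff_of_nonneg (hS k ω) hlam).1 h0).1

theorem measurable_ratioProd {_ : MeasurableSpace Ω} {k : ℕ} (hS : ∀ i < k, Measurable (S i)) :
    Measurable (ratioProd S lam k) :=
  Finset.measurable_prod _ fun i hi =>
    (hS i (mem_range.1 hi)).div ((hS i (mem_range.1 hi)).add_const lam)

end RatioProd

section CompanionProcess

variable {Ω : Type*} {a : ℝ} {f : ℝ → ℝ} {W : ℕ → Ω → ℝ}

def companionProcess (a : ℝ) (f : ℝ → ℝ) (W : ℕ → Ω → ℝ) (i : ℕ) (ω : Ω) : ℝ :=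
  a + ∑ j ∈ range i, f (W (j + 1) ω)

theorem companionProcess_zero (ω : Ω) : companionProcess a f W 0 ω = a := by
  simp [companionProcess]

theorem companionProcess_succ (i : ℕ) (ω : Ω) :
    companionProcess a f W (i + 1) ω = companionProcess a f W i ω + f (W (i + 1) ω) := by
  simp only [companionProcess, sum_range_succ, add_assoc]

theorem companionProcess_nonneg (ha : 0 ≤ a) (hf : ∀ x, 0 ≤ f x) (i : ℕ) (ω : Ω) :
    0 ≤ companionProcess a f W i ω :=
  add_nonneg ha (sum_nonneg fun _ _ => hf _)

theorem companionProcess_le {J : ℝ} (hf : ∀ x, f x ≤ J) (i : ℕ) (ω : Ω) :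
    companionProcess a f W i ω ≤ a + i * J := by
  have hsum := sum_le_sum (s := range i) fun j _ => hf (W (j + 1) ω)
  rw [sum_const, card_range, nsmul_eq_mul] at hsum
  exact (add_le_add_iff_left a).2 hsum

theorem measurable_companionProcess [MeasurableSpace Ω] (hW : ∀ i, StronglyMeasurable (W i))
    (hf : Measurable f) (i : ℕ) :
    Measurable[Filtration.natural W hW i] (companionProcess a f W i) :=
  measurable_const.add <| Finset.measurable_sum _ fun j hj => hf.comp <|
    (Filtration.stronglyAdapted_natural hW (j + 1)).measurable.mono
      (Filtration.mono _ (mem_range.1 hj)) le_rfl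

end CompanionProcess

section Expectations

variable {Ω : Type*} [MeasurableSpace Ω] {P : Measure Ω} [IsProbabilityMeasure P]
  {W : ℕ → Ω → ℝ} {a lam J : ℝ} {f : ℝ → ℝ}

theorem measurable_ratioProd_companionProcess (hW : ∀ i, StronglyMeasurable (W i))
    (hf : Measurable f) (k : ℕ) :
    Measurable[Filtration.natural W hW k] (ratioProd (companionProcess a f W) lam (k + 1)) :=
  measurable_ratioProd fun i hi =>
    (measurable_companionProcess hW hf i).mono (Filtration.mono _ (Nat.lt_succ_iff.1 hi)) le_rfl

theorem integrable_ratioProd_companionProcess_mul (hW : ∀ i, StronglyMeasurable (W i))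
    (hf : Measurable f) (ha : 0 ≤ a) (hf0 : ∀ x, 0 ≤ f x) (hlam : 0 ≤ lam) (k : ℕ)
    {Y : Ω → ℝ} {C : ℝ} (hY : Measurable Y) (hY0 : ∀ ω, 0 ≤ Y ω) (hYC : ∀ ω, Y ω ≤ C) :
    Integrable (fun ω => ratioProd (companionProcess a f W) lam (k + 1) ω * Y ω) P := by
  have hS0 := companionProcess_nonneg (W := W) ha hf0
  have hT := (measurable_ratioProd_companionProcess (a := a) (lam := lam) hW hf k).mono
    (Filtration.le _ k) le_rfl
  refine .of_bound (hT.mul hY).aestronglyMeasurable C (ae_of_all _ fun ω => ?_)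
  rw [Real.norm_of_nonneg (mul_nonneg (ratioProd_nonneg hS0 hlam _ ω) (hY0 ω))]
  exact (mul_le_of_le_one_left (hY0 ω) (ratioProd_le_one hS0 hlam _ ω)).trans (hYC ω)

theorem integral_ratioProd_mul_companionProcess_le (hW : ∀ i, StronglyMeasurable (W i))
    (hf : Measurable f) (ha : 0 ≤ a) (hf0 : ∀ x, 0 ≤ f x) (hfJ : ∀ x, f x ≤ J)
    (hlam : 0 ≤ lam) (k : ℕ) :
    ∫ ω, ratioProd (companionProcess a f W) lam k ω * companionProcess a f W k ω ∂P
      ≤ (a + lam + k * J) * ∫ ω, ratioProd (companionProcess a f W) lam (k + 1) ω ∂P := by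
  have hS0 := companionProcess_nonneg (W := W) ha hf0
  have hT := integrable_ratioProd_companionProcess_mul (P := P) hW hf ha hf0 hlam k
    measurable_const (fun _ => zero_le_one) fun _ => le_rfl
  simp_rw [← ratioProd_succ_mul_add hS0 hlam k, ← integral_const_mul]
  refine integral_mono_of_nonneg (ae_of_all _ fun ω => ?_) (by simpa using hT.const_mul _)
    (ae_of_all _ fun ω => ?_)
  · exact mul_nonneg (ratioProd_nonneg hS0 hlam _ ω) (add_nonneg (hS0 k ω) hlam)
  · refine (mul_le_mul_of_nonneg_left ?_ (ratioProd_nonneg hS0 hlam _ ω)).trans_eq (mul_comm _ _)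
    linarith [companionProcess_le (W := W) (a := a) hfJ k ω]

theorem integral_ratioProd_mul_companionProcess_succ {μ : Measure ℝ}
    (hW : ∀ i, StronglyMeasurable (W i)) (hind : iIndepFun W P) (hWid : ∀ i, P.map (W i) = μ)
    (hf : Measurable f) (ha : 0 ≤ a) (hf0 : ∀ x, 0 ≤ f x) (hfJ : ∀ x, f x ≤ J)
    (hlam : 0 ≤ lam) (k : ℕ) :
    ∫ ω, ratioProd (companionProcess a f W) lam (k + 1) ω * companionProcess a f W (k + 1) ω ∂P
      = ∫ ω, ratioProd (companionProcess a f W) lam k ω * companionProcess a f W k ω ∂P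
        - (lam - ∫ x, f x ∂μ) * ∫ ω, ratioProd (companionProcess a f W) lam (k + 1) ω ∂P := by
  have hS0 := companionProcess_nonneg (W := W) ha hf0
  have hT := integrable_ratioProd_companionProcess_mul (P := P) hW hf ha hf0 hlam k
    measurable_const (fun _ => zero_le_one) fun _ => le_rfl
  have hTS := integrable_ratioProd_companionProcess_mul (P := P) hW hf ha hf0 hlam k
    ((measurable_companionProcess hW hf k).mono (Filtration.le _ k) le_rfl) (hS0 k)
    (companionProcess_le hfJ k)
  have hTf := integrable_ratioProd_companionProcess_mul (P := P) hW hf ha hf0 hlam k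
    (Y := fun ω => f (W (k + 1) ω)) (hf.comp (hW (k + 1)).measurable) (fun _ => hf0 _)
    fun _ => hfJ _
  simp only [mul_one] at hT
  have hmean : ∫ ω, f (W (k + 1) ω) ∂P = ∫ x, f x ∂μ := by
    rw [← hWid (k + 1), integral_map (hW (k + 1)).measurable.aemeasurable
      hf.aestronglyMeasurable]
  have hold : ∫ ω, ratioProd (companionProcess a f W) lam k ω * companionProcess a f W k ω ∂P
      = ∫ ω, ratioProd (companionProcess a f W) lam (k + 1) ω * companionProcess a f W k ω ∂P
        + (∫ ω, ratioProd (companionProcess a f W) lam (k + 1) ω ∂P) * lam := by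
    simp_rw [← ratioProd_succ_mul_add hS0 hlam k, mul_add]
    rw [integral_add hTS (hT.mul_const lam), integral_mul_const]
  have hnew : ∫ ω, ratioProd (companionProcess a f W) lam (k + 1) ω
        * companionProcess a f W (k + 1) ω ∂P
      = ∫ ω, ratioProd (companionProcess a f W) lam (k + 1) ω * companionProcess a f W k ω ∂P
        + (∫ ω, ratioProd (companionProcess a f W) lam (k + 1) ω ∂P) * ∫ x, f x ∂μ := by
    simp_rw [companionProcess_succ, mul_add]
    rw [integral_add hTS hTf, iIndepFun.integral_mul_comp_eq_of_measurable_natural hW hind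
      k.lt_succ_self (measurable_ratioProd_companionProcess hW hf k) hf, hmean]
  rw [hold, hnew]
  ring

theorem tsum_lintegral_ratioProd_companionProcess {μ : Measure ℝ}
    (hW : ∀ i, StronglyMeasurable (W i)) (hind : iIndepFun W P) (hWid : ∀ i, P.map (W i) = μ)
    (hf : Measurable f) (ha : 0 ≤ a) (hf0 : ∀ x, 0 ≤ f x) (hfJ : ∀ x, f x ≤ J)
    (hlam : ∫ x, f x ∂μ ≤ lam) :
    ∑' k, ∫⁻ ω, ENNReal.ofReal (ratioProd (companionProcess a f W) lam (k + 1) ω) ∂P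
      = ENNReal.ofReal a / ENNReal.ofReal (lam - ∫ x, f x ∂μ) := by
  have hlam0 : 0 ≤ lam := (integral_nonneg hf0).trans hlam
  have hS0 := companionProcess_nonneg (W := W) ha hf0
  have hT (k : ℕ) : Integrable (ratioProd (companionProcess a f W) lam (k + 1)) P := by
    simpa using integrable_ratioProd_companionProcess_mul hW hf ha hf0 hlam0 k measurable_const
      (fun _ => zero_le_one) fun _ => le_rfl
  simp_rw [← ofReal_integral_eq_lintegral_ofReal (hT _)
    (ae_of_all _ (ratioProd_nonneg hS0 hlam0 _))]
  rcases ha.eq_or_lt with rfl | hpos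
  · simp_rw [fun k ω => ratioProd_succ_eq_zero (lam := lam)
      (companionProcess_zero (f := f) (W := W) ω) k]
    simp
  have hu0 : ∫ ω, ratioProd (companionProcess a f W) lam 0 ω
      * companionProcess a f W 0 ω ∂P = a := by
    simp [ratioProd_zero, companionProcess_zero]
  have key := tsum_ofReal_eq_div_of_recurrence
    (t := fun k => ∫ ω, ratioProd (companionProcess a f W) lam (k + 1) ω ∂P)
    (u := fun k => ∫ ω, ratioProd (companionProcess a f W) lam k ω
      * companionProcess a f W k ω ∂P)
    (fun k => integral_nonneg (ratioProd_nonneg hS0 hlam0 _))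
    (fun k => integral_nonneg fun ω => mul_nonneg (ratioProd_nonneg hS0 hlam0 _ ω) (hS0 k ω))
    (hpos.trans_eq hu0.symm) (sub_nonneg.2 hlam) (by positivity : 0 < a + lam)
    ((hf0 0).trans (hfJ 0))
    (integral_ratioProd_mul_companionProcess_succ hW hind hWid hf ha hf0 hfJ hlam0)
    (integral_ratioProd_mul_companionProcess_le hW hf ha hf0 hfJ hlam0)
  rwa [hu0] at key

end Expectations

theorem companion_process_geometric_sum_general
    {Ω : Type*} [MeasurableSpace Ω] (P : Measure Ω) [IsProbabilityMeasure P]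
    (wstar : ℝ) (μ : Measure ℝ) [IsProbabilityMeasure μ]
    (g : ℝ → ℝ → ℝ) (h : ℝ → ℝ) (J : ℝ)
    (hgmeas : Measurable (Function.uncurry g))
    (hg0 : ∀ x y, 0 ≤ g x y) (hgJ : ∀ x y, g x y ≤ J)
    (hh0 : ∀ x, 0 ≤ h x)
    (W : ℕ → Ω → ℝ) (hWmeas : ∀ i, Measurable (W i))
    (hWid : ∀ i, P.map (W i) = μ)
    (hWindep : ProbabilityTheory.iIndepFun W P)
    (gtilde : ℝ → ℝ) (hgtilde : ∀ x, gtilde x = ∫ y, g x y ∂μ)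
    (S : ℝ → ℕ → Ω → ℝ)
    (hS : ∀ w i ω, S w i ω = h w + ∑ j ∈ Finset.range i, g w (W (j + 1) ω))
    (w : ℝ) (hw : w ∈ Set.Icc 0 wstar)
    (lam : ℝ) (hlam : ∀ x ∈ Set.Icc 0 wstar, gtilde x ≤ lam) :
    (∑' k : ℕ, ∫⁻ ω, ENNReal.ofReal
        (∏ i ∈ Finset.range (k + 1), S w i ω / (S w i ω + lam)) ∂P)
      = ENNReal.ofReal (h w) / ENNReal.ofReal (lam - gtilde w) := by
  have hSw : S w = companionProcess (h w) (g w) W := funext fun i => funext (hS w i)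
  rw [hgtilde, hSw]
  exact tsum_lintegral_ratioProd_companionProcess (fun i => (hWmeas i).stronglyMeasurable)
    hWindep hWid (hgmeas.comp measurable_prodMk_left) (hh0 w) (hg0 w) (hgJ w)
    (hgtilde w ▸ hlam w hw)

/-- Lemma 1.4: for the companion fitness process `S_i(w)` built from bounded nonnegative
measurable functions `g, h` and i.i.d. `μ`-distributed weights `W₁, W₂, …`, for every
`w ∈ [0, w*]` and every `λ ≥ g̃₊ := sup_{x ∈ [0,w*]} g̃(x)` (where `g̃(x) = E[g(x,W)]`),
`∑_{k=1}^∞ E[∏_{i=0}^{k-1} S_i(w)/(S_i(w)+λ)] = h(w)/(λ - g̃(w))`,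
the right-hand side (in `ℝ≥0∞`) being infinite when `λ = g̃₊ = g̃(w)` (and `h(w) > 0`). -/
theorem companion_process_geometric_sum
    {Ω : Type*} [MeasurableSpace Ω] (P : Measure Ω) [IsProbabilityMeasure P]
    (wstar : ℝ) (μ : Measure ℝ) [IsProbabilityMeasure μ]
    (hsupp : ∀ᵐ x ∂μ, x ∈ Set.Icc 0 wstar)
    (g : ℝ → ℝ → ℝ) (h : ℝ → ℝ) (J : ℝ)
    (hgmeas : Measurable (Function.uncurry g)) (hhmeas : Measurable h)
    (hg0 : ∀ x y, 0 ≤ g x y) (hgJ : ∀ x y, g x y ≤ J)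
    (hh0 : ∀ x, 0 ≤ h x) (hhJ : ∀ x, h x ≤ J)
    (W : ℕ → Ω → ℝ) (hWmeas : ∀ i, Measurable (W i))
    (hWid : ∀ i, P.map (W i) = μ)
    (hWindep : ProbabilityTheory.iIndepFun W P)
    (gtilde : ℝ → ℝ) (hgtilde : ∀ x, gtilde x = ∫ y, g x y ∂μ)
    (S : ℝ → ℕ → Ω → ℝ)
    (hS : ∀ w i ω, S w i ω = h w + ∑ j ∈ Finset.range i, g w (W (j + 1) ω))
    (w : ℝ) (hw : w ∈ Set.Icc 0 wstar)
    (lam : ℝ) (hlam : ∀ x ∈ Set.Icc 0 wstar, gtilde x ≤ lam) :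
    (∑' k : ℕ, ∫⁻ ω, ENNReal.ofReal
        (∏ i ∈ Finset.range (k + 1), S w i ω / (S w i ω + lam)) ∂P)
      = ENNReal.ofReal (h w) / ENNReal.ofReal (lam - gtilde w) :=
  companion_process_geometric_sum_general P wstar μ g h J hgmeas hg0 hgJ hh0 W hWmeas hWid hWindep
    gtilde hgtilde S hS w hw lam hlam
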